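/- Let β ∈ (0,1), r ∈ (0,1), and 0 < α < α + Δ < 1 with Δ > 0. If Φ⁻¹(β) − √r·Φ⁻¹(α + Δ) ≥ 0, then (1/β)·[Φ₂(Φ⁻¹(α+Δ), Φ⁻¹(β); √r) − Φ₂(Φ⁻¹(α), Φ⁻¹(β); √r)] ≥ Δ/(2β). -/

import Mathlib

open Real MeasureTheory Filter Topology
open Set

/-- The standard normal density φ(x) = (2π)^{-1/2} exp(-x²/2). -/
noncomputable def stdNormalPDF (x : ℝ) : ℝ :=
  (Real.sqrt (2 * Real.pi))⁻¹ * Real.exp (-x ^ 2 / 2)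

/-- The standard normal CDF Φ(x) = ∫_{-∞}^x φ(u) du. -/
noncomputable def stdNormalCDF (x : ℝ) : ℝ :=
  ∫ u in Set.Iic x, stdNormalPDF u

/-- scaled centered gaussian -/
noncomputable def gauss (s y : ℝ) : ℝ := Real.exp (-y ^ 2 / (2 * s ^ 2))

lemma gauss_eq (s : ℝ) : gauss s = fun y => Real.exp (-((2 * s ^ 2)⁻¹) * y ^ 2) := by
  funext y; unfold gauss; ring_nf

lemma gauss_integrable {s : ℝ} (hs : 0 < s) : Integrable (gauss s) := by
  rw [gauss_eq]
  exact integrable_exp_neg_mul_sq (by positivity)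

lemma gauss_total {s : ℝ} (hs : 0 < s) : ∫ y, gauss s y = s * Real.sqrt (2 * π) := by
  rw [gauss_eq, integral_gaussian]
  rw [div_inv_eq_mul, show π * (2 * s ^ 2) = s ^ 2 * (2 * π) by ring,
    Real.sqrt_mul (by positivity), Real.sqrt_sq hs.le]

lemma gauss_nonneg (s y : ℝ) : 0 ≤ gauss s y := (Real.exp_pos _).le

lemma gauss_half {s : ℝ} (hs : 0 < s) :
    ∫ y in Iic (0 : ℝ), gauss s y = s * Real.sqrt (2 * π) / 2 := by
  have hsym : ∫ y in Iic (0 : ℝ), gauss s y = ∫ y in Ioi (0 : ℝ), gauss s y := by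
    have := integral_comp_neg_Iic (0 : ℝ) (gauss s)
    simp only [neg_zero] at this
    rw [← this]
    congr 1; funext y; unfold gauss; ring_nf
  have hadd := intervalIntegral.integral_Iic_add_Ioi (b := (0:ℝ))
    ((gauss_integrable hs).integrableOn) ((gauss_integrable hs).integrableOn)
  rw [gauss_total hs] at hadd
  rw [← hsym] at hadd
  linarith

lemma setIntegral_shift (f : ℝ → ℝ) (b c : ℝ) :
    ∫ y in Iic b, f (y - c) = ∫ y in Iic (b - c), f y := by
  have A : MeasurableEmbedding fun x : ℝ => x + c :=
    (Homeomorph.addRight c).isClosedEmbedding.measurableEmbedding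
  have hmap : Measure.map (fun x : ℝ => x + c) volume = volume :=
    map_add_right_eq_self volume c
  have := A.setIntegral_map (μ := volume) (fun y => f (y - c)) (Iic b)
  rw [hmap] at this
  rw [this]
  have hpre : (fun x : ℝ => x + c) ⁻¹' Iic b = Iic (b - c) := by
    ext x; simp [le_sub_iff_add_le]
  rw [hpre]
  congr 1; funext x; simp

lemma stdNormalPDF_eq : stdNormalPDF = fun x => (Real.sqrt (2 * π))⁻¹ * gauss 1 x := by
  funext x; unfold stdNormalPDF gauss; norm_num

lemma stdNormalPDF_pos (x : ℝ) : 0 < stdNormalPDF x := by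
  unfold stdNormalPDF
  positivity

lemma stdNormalPDF_integrable : Integrable stdNormalPDF := by
  rw [stdNormalPDF_eq]
  exact (gauss_integrable one_pos).const_mul _

lemma stdNormalPDF_total : ∫ x, stdNormalPDF x = 1 := by
  rw [stdNormalPDF_eq, MeasureTheory.integral_const_mul, gauss_total one_pos]
  rw [one_mul, inv_mul_cancel₀ (by positivity)]

lemma stdNormalPDF_continuous : Continuous stdNormalPDF := by
  unfold stdNormalPDF
  continuity

lemma stdNormalCDF_sub (a b : ℝ) :
    stdNormalCDF b - stdNormalCDF a = ∫ x in a..b, stdNormalPDF x := by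
  exact intervalIntegral.integral_Iic_sub_Iic
    stdNormalPDF_integrable.integrableOn stdNormalPDF_integrable.integrableOn

lemma stdNormalCDF_strictMono : StrictMono stdNormalCDF := by
  intro a b hab
  have h := stdNormalCDF_sub a b
  have hpos : 0 < ∫ x in a..b, stdNormalPDF x :=
    intervalIntegral.intervalIntegral_pos_of_pos_on
      stdNormalPDF_integrable.intervalIntegrable
      (fun x _ => stdNormalPDF_pos x) hab
  linarith

lemma stdNormalCDF_continuous : Continuous stdNormalCDF := by
  have : stdNormalCDF = fun b => stdNormalCDF 0 + ∫ x in (0:ℝ)..b, stdNormalPDF x := by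
    funext b
    have := stdNormalCDF_sub 0 b
    linarith
  rw [this]
  exact continuous_const.add (stdNormalPDF_integrable.continuous_primitive 0)

lemma stdNormalCDF_exists_lt {p : ℝ} (hp : 0 < p) : ∃ a : ℝ, stdNormalCDF a < p := by
  have hT : Tendsto (fun n : ℕ => stdNormalCDF (-(n : ℝ))) atTop (𝓝 0) := by
    have h := tendsto_setIntegral_of_antitone (μ := volume) (f := stdNormalPDF)
      (s := fun n : ℕ => Iic (-(n : ℝ))) (fun n => measurableSet_Iic)
      (fun m n hmn => Iic_subset_Iic.2 (neg_le_neg (Nat.cast_le.2 hmn)))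
      ⟨0, stdNormalPDF_integrable.integrableOn⟩
    have hempty : ⋂ n : ℕ, Iic (-(n : ℝ)) = ∅ := by
      ext x; simp only [mem_iInter, mem_Iic, mem_empty_iff_false, iff_false, not_forall, not_le]
      obtain ⟨n, hn⟩ := exists_nat_gt (-x)
      exact ⟨n, by linarith⟩
    rw [hempty] at h
    simpa [stdNormalCDF] using h
  obtain ⟨n, hn⟩ := (hT.eventually (eventually_lt_nhds hp)).exists
  exact ⟨-(n : ℝ), hn⟩

lemma stdNormalCDF_exists_gt {p : ℝ} (hp : p < 1) : ∃ b : ℝ, p < stdNormalCDF b := by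
  have hT : Tendsto (fun n : ℕ => stdNormalCDF (n : ℝ)) atTop (𝓝 1) := by
    have h := tendsto_setIntegral_of_monotone (μ := volume) (f := stdNormalPDF)
      (s := fun n : ℕ => Iic ((n : ℝ))) (fun n => measurableSet_Iic)
      (fun m n hmn => Iic_subset_Iic.2 (by exact_mod_cast hmn))
      (stdNormalPDF_integrable.integrableOn)
    have huniv : ⋃ n : ℕ, Iic ((n : ℝ)) = univ := by
      ext x; simp only [mem_iUnion, mem_Iic, mem_univ, iff_true]
      obtain ⟨n, hn⟩ := exists_nat_gt x
      exact ⟨n, hn.le⟩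
    rw [huniv] at h
    simpa [stdNormalCDF, stdNormalPDF_total] using h
  obtain ⟨n, hn⟩ := (hT.eventually (eventually_gt_nhds hp)).exists
  exact ⟨(n : ℝ), hn⟩

lemma stdNormalCDF_surj {p : ℝ} (hp : p ∈ Set.Ioo (0:ℝ) 1) : ∃ x, stdNormalCDF x = p := by
  obtain ⟨a, ha⟩ := stdNormalCDF_exists_lt hp.1
  obtain ⟨b, hb⟩ := stdNormalCDF_exists_gt hp.2
  have : p ∈ uIcc (stdNormalCDF a) (stdNormalCDF b) := by
    rw [mem_uIcc]; left; exact ⟨ha.le, hb.le⟩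
  obtain ⟨x, _, hx⟩ := intermediate_value_uIcc (stdNormalCDF_continuous.continuousOn (s := uIcc a b)) this
  exact ⟨x, hx⟩

lemma stdNormalCDF_invFun {p : ℝ} (hp : p ∈ Set.Ioo (0:ℝ) 1) :
    stdNormalCDF (Function.invFun stdNormalCDF p) = p :=
  Function.invFun_eq (stdNormalCDF_surj hp)

/-- The standard bivariate normal density with correlation ρ. -/
noncomputable def biNormalPDF (x y ρ : ℝ) : ℝ :=
  (2 * Real.pi * Real.sqrt (1 - ρ ^ 2))⁻¹ *
    Real.exp (-(x ^ 2 - 2 * ρ * x * y + y ^ 2) / (2 * (1 - ρ ^ 2)))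

/-- The standard bivariate normal CDF Φ₂(a, b; ρ). -/
noncomputable def biNormalCDF (a b ρ : ℝ) : ℝ :=
  ∫ x in Set.Iic a, ∫ y in Set.Iic b, biNormalPDF x y ρ

lemma biNormal_factor {ρ : ℝ} (hρ : ρ ^ 2 < 1) (x y : ℝ) :
    biNormalPDF x y ρ = (2 * π * Real.sqrt (1 - ρ ^ 2))⁻¹ * Real.exp (-x ^ 2 / 2) *
      gauss (Real.sqrt (1 - ρ ^ 2)) (y - ρ * x) := by
  have h1 : (0:ℝ) < 1 - ρ ^ 2 := by linarith
  have hs : Real.sqrt (1 - ρ ^ 2) ^ 2 = 1 - ρ ^ 2 := Real.sq_sqrt h1.le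
  unfold biNormalPDF gauss
  rw [mul_assoc ((2 * π * Real.sqrt (1 - ρ ^ 2))⁻¹), ← Real.exp_add]
  congr 2
  rw [hs]
  field_simp
  ring

lemma key_const {s : ℝ} (hs : 0 < s) :
    (2 * π * s)⁻¹ * (s * Real.sqrt (2 * π)) = (Real.sqrt (2 * π))⁻¹ := by
  have h2π : Real.sqrt (2 * π) ^ 2 = 2 * π := Real.sq_sqrt (by positivity)
  have hq : (0:ℝ) < Real.sqrt (2 * π) := Real.sqrt_pos.2 (by positivity)
  set q := Real.sqrt (2 * π) with hqdef
  rw [← h2π]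
  field_simp

lemma inner_integral_le {ρ : ℝ} (hρ : ρ ^ 2 < 1) (b x : ℝ) :
    ∫ y in Iic b, biNormalPDF x y ρ ≤ stdNormalPDF x := by
  have h1 : (0:ℝ) < 1 - ρ ^ 2 := by linarith
  set s := Real.sqrt (1 - ρ ^ 2) with hs
  have hs0 : 0 < s := Real.sqrt_pos.2 h1
  have hfac : ∀ y, biNormalPDF x y ρ =
      (2 * π * s)⁻¹ * Real.exp (-x ^ 2 / 2) * gauss s (y - ρ * x) :=
    fun y => biNormal_factor hρ x y
  simp_rw [hfac]
  rw [MeasureTheory.integral_const_mul, setIntegral_shift (gauss s) b (ρ * x)]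
  have hle : ∫ y in Iic (b - ρ * x), gauss s y ≤ s * Real.sqrt (2 * π) := by
    rw [← gauss_total hs0]
    exact setIntegral_le_integral (gauss_integrable hs0)
      (Eventually.of_forall (gauss_nonneg s))
  have hC : (0:ℝ) ≤ (2 * π * s)⁻¹ * Real.exp (-x ^ 2 / 2) := by positivity
  calc (2 * π * s)⁻¹ * Real.exp (-x ^ 2 / 2) * ∫ y in Iic (b - ρ * x), gauss s y
      ≤ (2 * π * s)⁻¹ * Real.exp (-x ^ 2 / 2) * (s * Real.sqrt (2 * π)) :=
        mul_le_mul_of_nonneg_left hle hC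
    _ = stdNormalPDF x := by
        unfold stdNormalPDF
        linear_combination Real.exp (-x ^ 2 / 2) * key_const hs0

lemma inner_integral_nonneg (ρ b x : ℝ) : 0 ≤ ∫ y in Iic b, biNormalPDF x y ρ :=
  integral_nonneg fun y => by unfold biNormalPDF; positivity

lemma inner_integral_ge {ρ : ℝ} (hρ : ρ ^ 2 < 1) {b x : ℝ} (hx : ρ * x ≤ b) :
    stdNormalPDF x / 2 ≤ ∫ y in Iic b, biNormalPDF x y ρ := by
  have h1 : (0:ℝ) < 1 - ρ ^ 2 := by linarith
  set s := Real.sqrt (1 - ρ ^ 2) with hs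
  have hs0 : 0 < s := Real.sqrt_pos.2 h1
  have hfac : ∀ y, biNormalPDF x y ρ =
      (2 * π * s)⁻¹ * Real.exp (-x ^ 2 / 2) * gauss s (y - ρ * x) :=
    fun y => biNormal_factor hρ x y
  simp_rw [hfac]
  rw [MeasureTheory.integral_const_mul, setIntegral_shift (gauss s) b (ρ * x)]
  have hge : s * Real.sqrt (2 * π) / 2 ≤ ∫ y in Iic (b - ρ * x), gauss s y := by
    rw [← gauss_half hs0]
    exact setIntegral_mono_set ((gauss_integrable hs0).integrableOn)
      (Eventually.of_forall (gauss_nonneg s))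
      (HasSubset.Subset.eventuallyLE (Iic_subset_Iic.2 (by linarith)))
  have hC : (0:ℝ) ≤ (2 * π * s)⁻¹ * Real.exp (-x ^ 2 / 2) := by positivity
  calc stdNormalPDF x / 2
      = (2 * π * s)⁻¹ * Real.exp (-x ^ 2 / 2) * (s * Real.sqrt (2 * π) / 2) := by
        unfold stdNormalPDF
        linear_combination (-Real.exp (-x ^ 2 / 2) / 2) * key_const hs0
    _ ≤ _ := mul_le_mul_of_nonneg_left hge hC

/-- The inverse Φ⁻¹ of the standard normal CDF on (0,1). -/
noncomputable def stdNormalCDFInv (p : ℝ) : ℝ :=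
  Function.invFun stdNormalCDF p

lemma stdNormalCDFInv_eq {p : ℝ} (hp : p ∈ Set.Ioo (0:ℝ) 1) :
    stdNormalCDF (stdNormalCDFInv p) = p :=
  stdNormalCDF_invFun hp

lemma biNormalPDF_continuous (ρ : ℝ) : Continuous fun p : ℝ × ℝ => biNormalPDF p.1 p.2 ρ := by
  unfold biNormalPDF
  fun_prop

lemma innerFun_stronglyMeasurable (ρ b : ℝ) :
    StronglyMeasurable fun x => ∫ y in Iic b, biNormalPDF x y ρ :=
  StronglyMeasurable.integral_prod_right (f := fun x y => biNormalPDF x y ρ)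
    (biNormalPDF_continuous ρ).stronglyMeasurable

lemma innerFun_integrableOn {ρ : ℝ} (hρ : ρ ^ 2 < 1) (b : ℝ) (s : Set ℝ) :
    IntegrableOn (fun x => ∫ y in Iic b, biNormalPDF x y ρ) s := by
  apply Integrable.mono' stdNormalPDF_integrable.integrableOn
    (innerFun_stronglyMeasurable ρ b).aestronglyMeasurable
  apply ae_of_all
  intro x
  rw [Real.norm_eq_abs, abs_of_nonneg (inner_integral_nonneg ρ b x)]
  exact inner_integral_le hρ b x


/-- Let β ∈ (0,1), r ∈ (0,1), and 0 < α < α + Δ < 1 with Δ > 0.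
If Φ⁻¹(β) − √r·Φ⁻¹(α + Δ) ≥ 0, then
(1/β)·[Φ₂(Φ⁻¹(α+Δ), Φ⁻¹(β); √r) − Φ₂(Φ⁻¹(α), Φ⁻¹(β); √r)] ≥ Δ/(2β). -/
theorem access_gain_lower_bound (β r α Δ : ℝ)
    (hβ : β ∈ Set.Ioo (0 : ℝ) 1) (hr : r ∈ Set.Ioo (0 : ℝ) 1)
    (hα : 0 < α) (hΔ : 0 < Δ) (hαΔ : α + Δ < 1)
    (hsign : stdNormalCDFInv β - Real.sqrt r * stdNormalCDFInv (α + Δ) ≥ 0) :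
    (1 / β) * (biNormalCDF (stdNormalCDFInv (α + Δ)) (stdNormalCDFInv β) (Real.sqrt r) -
        biNormalCDF (stdNormalCDFInv α) (stdNormalCDFInv β) (Real.sqrt r)) ≥
      Δ / (2 * β) := by
  obtain ⟨hβ0, hβ1⟩ := hβ
  obtain ⟨hr0, hr1⟩ := hr
  set ρ := Real.sqrt r with hρdef
  set a₁ := stdNormalCDFInv α with ha1def
  set a₂ := stdNormalCDFInv (α + Δ) with ha2def
  set b := stdNormalCDFInv β with hbdef
  have hρ0 : 0 < ρ := Real.sqrt_pos.2 hr0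
  have hρ2 : ρ ^ 2 < 1 := by rw [hρdef, Real.sq_sqrt hr0.le]; exact hr1
  have hΦ1 : stdNormalCDF a₁ = α := stdNormalCDFInv_eq ⟨hα, by linarith⟩
  have hΦ2 : stdNormalCDF a₂ = α + Δ := stdNormalCDFInv_eq ⟨by linarith, hαΔ⟩
  have ha12 : a₁ < a₂ := by
    apply stdNormalCDF_strictMono.lt_iff_lt.mp
    rw [hΦ1, hΦ2]; linarith
  have hdiff : biNormalCDF a₂ b ρ - biNormalCDF a₁ b ρ =
      ∫ x in a₁..a₂, ∫ y in Iic b, biNormalPDF x y ρ := by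
    unfold biNormalCDF
    exact intervalIntegral.integral_Iic_sub_Iic
      (innerFun_integrableOn hρ2 b _) (innerFun_integrableOn hρ2 b _)
  have hintv_h : IntervalIntegrable (fun x => ∫ y in Iic b, biNormalPDF x y ρ) volume a₁ a₂ :=
    (innerFun_integrableOn hρ2 b _).intervalIntegrable
  have hintv_p : IntervalIntegrable (fun x => stdNormalPDF x / 2) volume a₁ a₂ :=
    (stdNormalPDF_integrable.div_const 2).intervalIntegrable
  have hmono : ∫ x in a₁..a₂, stdNormalPDF x / 2 ≤
      ∫ x in a₁..a₂, ∫ y in Iic b, biNormalPDF x y ρ := by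
    apply intervalIntegral.integral_mono_on ha12.le hintv_p hintv_h
    intro x hx
    apply inner_integral_ge hρ2
    have h1 : ρ * x ≤ ρ * a₂ := mul_le_mul_of_nonneg_left hx.2 hρ0.le
    linarith [hsign]
  have hval : ∫ x in a₁..a₂, stdNormalPDF x / 2 = Δ / 2 := by
    rw [intervalIntegral.integral_div, ← stdNormalCDF_sub, hΦ1, hΦ2]
    ring
  have hD : Δ / 2 ≤ biNormalCDF a₂ b ρ - biNormalCDF a₁ b ρ := by
    rw [hdiff]; linarith
  calc Δ / (2 * β) = (1 / β) * (Δ / 2) := by ring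
    _ ≤ (1 / β) * (biNormalCDF a₂ b ρ - biNormalCDF a₁ b ρ) :=
        mul_le_mul_of_nonneg_left hD (by positivity)
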